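/- Let a, b > 0, let w ∈ W_K, and let g(x,y) = α + βx + γy be an affine polynomial. Set m_b = (1/a)·∫₀ᵃ (∂w/∂y)(x,0) dx and m_t = (1/a)·∫₀ᵃ (∂w/∂y)(x,b) dx. Then ∫₀ᵃ g(x,b)·((∂w/∂y)(x,b) − m_t) dx − ∫₀ᵃ g(x,0)·((∂w/∂y)(x,0) − m_b) dx = (a²β/12)·∫₀ᵃ∫₀ᵇ (∂³w/∂x∂y²)(x,y) dy dx. (This is the identity I₁,K(u,w) = I′₁,K(u,w) for all u with ∂²u/∂y² = g ∈ P₁.) -/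

import Mathlib

/-!
On each horizontal edge `y = const` of `K`, `∂w/∂y` is a quadratic `h(x) = A + B x + C x²` in `x`:
the `x²`-coefficient `C` is the same on both edges, while the `x`-coefficient changes by
`b · ∂³w/∂x∂y²`, a constant. Since `h - mean h` has mean zero, the constant part of the weight
`g(·, y)` drops out and the edge term equals `β ∫₀ᵃ (x - a/2) h(x) dx = β (B + C a) a³ / 12`.
Taking the difference of the two edges leaves `β a³ b ∂³w/∂x∂y² / 12`, which is the right-hand side.
-/

open MvPolynomial

/-- Membership in the shape function space `W_K = P₃ ⊕ span{x⁴, y⁴}`. -/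
def memWK (w : MvPolynomial (Fin 2) ℝ) : Prop :=
  ∃ (p : MvPolynomial (Fin 2) ℝ) (c d : ℝ),
    p.totalDegree ≤ 3 ∧ w = p + C c * X 0 ^ 4 + C d * X 1 ^ 4

namespace MvPolynomial

theorem totalDegree_pderiv_le {R σ : Type*} [CommSemiring R] (i : σ) (p : MvPolynomial σ R) :
    (pderiv i p).totalDegree ≤ p.totalDegree - 1 := by
  classical
  refine Finset.sup_le fun m hm => ?_
  have hm' : m + Finsupp.single i 1 ∈ p.support := by
    rw [mem_support_iff, coeff_pderiv] at hm
    exact mem_support_iff.mpr (left_ne_zero_of_mul hm)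
  have := le_totalDegree hm'
  rw [Finsupp.sum_add_index' (fun _ => rfl) (fun _ _ _ => rfl),
    Finsupp.sum_single_index rfl] at this
  omega

end MvPolynomial

section Bivariate

variable {R : Type*} [CommSemiring R]

noncomputable def bideg (i j : ℕ) : Fin 2 →₀ ℕ := Finsupp.single 0 i + Finsupp.single 1 j

@[simp] lemma bideg_apply_zero (i j : ℕ) : bideg i j 0 = i := by simp [bideg]
@[simp] lemma bideg_apply_one (i j : ℕ) : bideg i j 1 = j := by simp [bideg]

lemma bideg_inj {i j k l : ℕ} : bideg i j = bideg k l ↔ i = k ∧ j = l := by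
  refine ⟨fun h => ⟨by simpa using congr($h 0), by simpa using congr($h 1)⟩, ?_⟩
  rintro ⟨rfl, rfl⟩
  rfl

lemma exists_eq_bideg (m : Fin 2 →₀ ℕ) : ∃ i j, m = bideg i j :=
  ⟨m 0, m 1, by ext k; fin_cases k <;> simp⟩

lemma sum_bideg (i j : ℕ) : ((bideg i j).sum fun _ e => e) = i + j := by
  rw [bideg, Finsupp.sum_add_index' (fun _ => rfl) (fun _ _ _ => rfl),
    Finsupp.sum_single_index rfl, Finsupp.sum_single_index rfl]

lemma monomial_bideg (i j : ℕ) (r : R) :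
    (monomial (bideg i j) r : MvPolynomial (Fin 2) R) = C r * X 0 ^ i * X 1 ^ j := by
  rw [X_pow_eq_monomial, X_pow_eq_monomial, C_mul_monomial, monomial_mul, bideg]
  simp

theorem exists_eq_of_totalDegree_le_two {q : MvPolynomial (Fin 2) R} (hq : q.totalDegree ≤ 2) :
    ∃ c₀ c₁ c₂ c₃ c₄ c₅ : R, q = C c₀ + C c₁ * X 0 + C c₂ * X 1 + C c₃ * X 0 ^ 2
      + C c₄ * X 0 * X 1 + C c₅ * X 1 ^ 2 := by
  classical
  set S : Finset (Fin 2 →₀ ℕ) :=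
    {bideg 0 0, bideg 1 0, bideg 0 1, bideg 2 0, bideg 1 1, bideg 0 2}
  have hsupp : q.support ⊆ S := by
    intro m hm
    obtain ⟨i, j, rfl⟩ := exists_eq_bideg m
    have hij := (le_totalDegree hm).trans hq
    rw [sum_bideg] at hij
    have hi : i ≤ 2 := by omega
    have hj : j ≤ 2 := by omega
    interval_cases i <;> interval_cases j <;> simp_all [S]
  refine ⟨coeff (bideg 0 0) q, coeff (bideg 1 0) q, coeff (bideg 0 1) q, coeff (bideg 2 0) q,
    coeff (bideg 1 1) q, coeff (bideg 0 2) q, ?_⟩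
  conv_lhs => rw [q.as_sum, Finset.sum_subset hsupp fun m _ hm => by
    rw [notMem_support_iff.mp hm, map_zero]]
  simp +decide only [S, Finset.sum_insert, Finset.mem_insert, Finset.mem_singleton, bideg_inj,
    Finset.sum_singleton, monomial_bideg]
  ring

end Bivariate

theorem exists_pderiv_one_eq_of_memWK {w : MvPolynomial (Fin 2) ℝ} (hw : memWK w) :
    ∃ c₀ c₁ c₂ c₃ c₄ c₅ c₆ : ℝ, pderiv 1 w = C c₀ + C c₁ * X 0 + C c₂ * X 1 + C c₃ * X 0 ^ 2
      + C c₄ * X 0 * X 1 + C c₅ * X 1 ^ 2 + C c₆ * X 1 ^ 3 := by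
  obtain ⟨p, c, d, hp, rfl⟩ := hw
  obtain ⟨c₀, c₁, c₂, c₃, c₄, c₅, hq⟩ :=
    exists_eq_of_totalDegree_le_two ((totalDegree_pderiv_le 1 p).trans (by omega))
  refine ⟨c₀, c₁, c₂, c₃, c₄, c₅, 4 * d, ?_⟩
  simp only [map_add, hq, pderiv_C_mul, pderiv_pow, pderiv_X_self,
    pderiv_X_of_ne (by decide : (0 : Fin 2) ≠ 1), C_mul, map_ofNat]
  ring

theorem integral_sub_half_mul_quadratic (a A B C : ℝ) :
    ∫ x in (0:ℝ)..a, (x - a / 2) * (A + B * x + C * x ^ 2) = (B + C * a) * a ^ 3 / 12 := by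
  have expand : ∀ x : ℝ, (x - a / 2) * (A + B * x + C * x ^ 2) =
      -(a / 2 * A) + (A - a / 2 * B) * x ^ 1 + (B - a / 2 * C) * x ^ 2 + C * x ^ 3 :=
    fun x => by ring
  simp_rw [expand]
  simp (disch := exact (Continuous.intervalIntegrable (by fun_prop) _ _)) only
    [intervalIntegral.integral_add, intervalIntegral.integral_const_mul, integral_pow,
      intervalIntegral.integral_const]
  ring

open intervalIntegral in
theorem integral_affine_mul_sub_average (a c β : ℝ) {h : ℝ → ℝ}
    (hh : IntervalIntegrable h MeasureTheory.volume 0 a) :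
    ∫ x in (0:ℝ)..a, (c + β * x) * (h x - 1 / a * ∫ t in (0:ℝ)..a, h t) =
      β * ∫ x in (0:ℝ)..a, (x - a / 2) * h x := by
  rcases eq_or_ne a 0 with rfl | ha
  · simp
  set I := ∫ t in (0:ℝ)..a, h t
  have hmean : 1 / a * I * a = I := by field_simp
  have hweight : IntervalIntegrable (fun x => c + β * x) MeasureTheory.volume 0 a :=
    intervalIntegrable_const.add (intervalIntegrable_id.const_mul β)
  have hxh : IntervalIntegrable (fun x => x * h x) MeasureTheory.volume 0 a :=
    hh.continuousOn_mul continuousOn_id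
  have hl : ∫ x in (0:ℝ)..a, (c + β * x) * (h x - 1 / a * I) =
      c * I + β * (∫ x in (0:ℝ)..a, x * h x) - 1 / a * I * (c * a + β * (a ^ 2 / 2)) := by
    have : ∀ x, (c + β * x) * (h x - 1 / a * I) =
        (c * h x + β * (x * h x)) - 1 / a * I * (c + β * x) := fun x => by ring
    simp_rw [this]
    rw [integral_sub ((hh.const_mul c).add (hxh.const_mul β)) (hweight.const_mul _),
      integral_add (hh.const_mul c) (hxh.const_mul β), integral_const_mul, integral_const_mul,
      integral_const_mul, integral_add intervalIntegrable_const (intervalIntegrable_id.const_mul β),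
      integral_const_mul, integral_id]
    simp only [integral_const, smul_eq_mul]
    ring
  have hr : ∫ x in (0:ℝ)..a, (x - a / 2) * h x = (∫ x in (0:ℝ)..a, x * h x) - a / 2 * I := by
    simp_rw [sub_mul]
    rw [integral_sub hxh (hh.const_mul _), integral_const_mul]
  rw [hl, hr]
  linear_combination (-c - β * a / 2) * hmean

theorem stmt8 (a b : ℝ)
    (w : MvPolynomial (Fin 2) ℝ) (hw : memWK w)
    (α β γ : ℝ)
    (mb mt : ℝ)
    (hmb : mb = (1 / a) * ∫ x in (0:ℝ)..a, eval ![x, 0] (pderiv 1 w))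
    (hmt : mt = (1 / a) * ∫ x in (0:ℝ)..a, eval ![x, b] (pderiv 1 w)) :
    (∫ x in (0:ℝ)..a, (α + β * x + γ * b) * (eval ![x, b] (pderiv 1 w) - mt)) -
      (∫ x in (0:ℝ)..a, (α + β * x + γ * 0) * (eval ![x, 0] (pderiv 1 w) - mb)) =
    (a ^ 2 * β / 12) *
      ∫ x in (0:ℝ)..a, ∫ y in (0:ℝ)..b,
        eval ![x, y] (pderiv 0 (pderiv 1 (pderiv 1 w))) := by
  obtain ⟨c₀, c₁, c₂, c₃, c₄, c₅, c₆, hdy⟩ := exists_pderiv_one_eq_of_memWK hw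
  have hslice : ∀ x y : ℝ, eval ![x, y] (pderiv 1 w) =
      (c₀ + c₂ * y + c₅ * y ^ 2 + c₆ * y ^ 3) + (c₁ + c₄ * y) * x + c₃ * x ^ 2 := by
    intro x y
    simp only [hdy, map_add, map_mul, map_pow, eval_C, eval_X, Matrix.cons_val_zero,
      Matrix.cons_val_one]
    ring
  have hmixed : pderiv 0 (pderiv 1 (pderiv 1 w)) = C c₄ := by
    simp [hdy, pderiv_X, pow_succ]
  have hedge : ∀ y : ℝ, ∫ x in (0:ℝ)..a, (α + β * x + γ * y) *
      (eval ![x, y] (pderiv 1 w) - 1 / a * ∫ x in (0:ℝ)..a, eval ![x, y] (pderiv 1 w)) =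
      β * ((c₁ + c₄ * y + c₃ * a) * a ^ 3 / 12) := by
    intro y
    have hcont : Continuous fun x => eval ![x, y] (pderiv 1 w) := by
      simp_rw [hslice]; fun_prop
    simp only [add_right_comm α (β * _) (γ * y)]
    rw [integral_affine_mul_sub_average _ _ _ (hcont.intervalIntegrable _ _)]
    simp_rw [hslice]
    rw [integral_sub_half_mul_quadratic]
  subst hmb hmt
  rw [hedge b, hedge 0, hmixed]
  simp only [eval_C, intervalIntegral.integral_const, smul_eq_mul]
  ring
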